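/- Let φ : ℝ → ℂ be an essentially bounded measurable function with compact support, and let 𝓕φ denote its Fourier transform, (𝓕φ)(ξ) = ∫_{ℝ} φ(x) e^{-2πiξx} dx. If 𝓕φ vanishes on a measurable set E ⊆ ℝ of positive Lebesgue measure, then φ = 0 almost everywhere on ℝ. -/

import Mathlib

open MeasureTheory Real Complex

open scoped FourierTransform

set_option maxHeartbeats 1000000

/-- A smooth compactly supported function is a Schwartz map. -/
lemma PW.norm_cexp (z : ℂ) : ‖Complex.exp z‖ = Real.exp z.re := by
  rw [Complex.norm_exp]

noncomputable def PW.toSchwartz (f : ℝ → ℂ) (hf : ContDiff ℝ ((⊤ : ℕ∞) : WithTop ℕ∞) f)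
    (hs : HasCompactSupport f) : SchwartzMap ℝ ℂ where
  toFun := f
  smooth' := hf
  decay' := by
    intro k n
    have h1 : Continuous fun x : ℝ => ‖x‖ ^ k * ‖iteratedFDeriv ℝ n f x‖ :=
      ((continuous_norm.pow k).mul (hf.continuous_iteratedFDeriv (by exact_mod_cast le_top)).norm)
    have h2 : HasCompactSupport fun x : ℝ => ‖x‖ ^ k * ‖iteratedFDeriv ℝ n f x‖ :=
      ((hs.iteratedFDeriv n).norm).mul_left
    obtain ⟨c, hc⟩ := h1.bounded_above_of_compact_support h2
    refine ⟨c, fun x => ?_⟩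
    have h3 := hc x
    rw [Real.norm_eq_abs] at h3
    exact (le_abs_self _).trans h3

/-- One-dimensional Paley–Wiener uniqueness: if an essentially bounded, compactly
supported (in the a.e. sense) function on ℝ has Fourier transform vanishing on a
set of positive Lebesgue measure, then it is zero almost everywhere. -/
theorem paley_wiener_uniqueness_R
    (φ : ℝ → ℂ)
    (hφ : MemLp φ ⊤ volume)
    (hsupp : ∃ K : Set ℝ, IsCompact K ∧ ∀ᵐ x ∂(volume : Measure ℝ), x ∉ K → φ x = 0)
    (E : Set ℝ) (hE : MeasurableSet E) (hEpos : 0 < volume E)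
    (hvanish : ∀ ξ ∈ E,
      (∫ x : ℝ, φ x * Complex.exp (-2 * Real.pi * Complex.I * (ξ * x))) = 0) :
    φ =ᵐ[volume] 0 := by
  classical
  obtain ⟨K, hK, hKae⟩ := hsupp
  have hKm : MeasurableSet K := hK.isClosed.measurableSet
  set ψ : ℝ → ℂ := K.indicator φ with hψdef
  have hψae : ψ =ᵐ[volume] φ := by
    filter_upwards [hKae] with x hx
    by_cases h : x ∈ K
    · simp [hψdef, Set.indicator_of_mem h]
    · simp [hψdef, Set.indicator_of_notMem h, hx h]
  -- bound on φ
  set C : ℝ := (eLpNormEssSup φ volume).toReal with hC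
  have hCnn : 0 ≤ C := ENNReal.toReal_nonneg
  have htop : eLpNormEssSup φ volume ≠ ⊤ := by
    have h := hφ.eLpNorm_lt_top
    rw [eLpNorm_exponent_top] at h
    exact h.ne
  have hφbd : ∀ᵐ x ∂(volume : Measure ℝ), ‖φ x‖ ≤ C := by
    filter_upwards [ae_le_eLpNormEssSup (f := φ) (μ := volume)] with x hx
    have := ENNReal.toReal_mono htop hx
    simpa [coe_nnnorm] using this
  have hψbd : ∀ᵐ x ∂(volume : Measure ℝ), ‖ψ x‖ ≤ C := by
    filter_upwards [hφbd] with x hx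
    by_cases h : x ∈ K
    · simpa [hψdef, Set.indicator_of_mem h] using hx
    · simp [hψdef, Set.indicator_of_notMem h, hCnn]
  have hψmeas : AEStronglyMeasurable ψ volume := hφ.1.indicator hKm
  -- integrability of ψ
  have hKind : Integrable (K.indicator fun _ : ℝ => C) volume := by
    rw [integrable_indicator_iff hKm]
    exact integrableOn_const hK.measure_lt_top.ne
  have hψint : Integrable ψ volume := by
    refine Integrable.mono' hKind hψmeas ?_
    filter_upwards [hψbd] with x hx
    by_cases h : x ∈ K
    · simpa [Set.indicator_of_mem h] using hx
    · simp [hψdef, Set.indicator_of_notMem h]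
  -- radius of K
  obtain ⟨R, hR⟩ : ∃ R : ℝ, K ⊆ Metric.closedBall 0 R := hK.isBounded.subset_closedBall 0
  have habsK : ∀ x ∈ K, |x| ≤ |R| := by
    intro x hx
    have := hR hx
    rw [Metric.mem_closedBall, Real.dist_eq, sub_zero] at this
    exact this.trans (le_abs_self R)
  -- the complex extension of the Fourier transform
  set G : ℂ → ℂ := fun z => ∫ x : ℝ, ψ x * Complex.exp (-2 * Real.pi * Complex.I * (z * x))
    with hGdef
  have hGdiff : Differentiable ℂ G := by
    intro z₀
    set B : ℝ := C * (2 * Real.pi * |R|) * Real.exp (2 * Real.pi * |R| * (|z₀.im| + 1)) with hB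
    have hBnn : 0 ≤ B := by positivity
    have key := hasDerivAt_integral_of_dominated_loc_of_deriv_le (μ := volume)
      (F := fun (z : ℂ) (a : ℝ) => ψ a * Complex.exp (-2 * Real.pi * Complex.I * (z * a)))
      (F' := fun (z : ℂ) (a : ℝ) =>
        ψ a * ((-2 * Real.pi * Complex.I * a) * Complex.exp (-2 * Real.pi * Complex.I * (z * a))))
      (x₀ := z₀) (bound := K.indicator fun _ => B) (s := Metric.ball z₀ 1) (Metric.ball_mem_nhds z₀ one_pos)
      ?_ ?_ ?_ ?_ ?_ ?_
    · exact key.2.differentiableAt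
    · filter_upwards with z
      exact hψmeas.mul (Complex.continuous_exp.comp (by fun_prop)).aestronglyMeasurable
    · -- integrability of F z₀
      refine Integrable.mono' (hKind.const_mul (Real.exp (2 * Real.pi * |R| * (|z₀.im| + 1))))
        (hψmeas.mul (Complex.continuous_exp.comp (by fun_prop)).aestronglyMeasurable) ?_
      filter_upwards [hψbd] with a ha
      by_cases h : a ∈ K
      · rw [norm_mul, PW.norm_cexp]
        have hre : (-2 * Real.pi * Complex.I * ((z₀ : ℂ) * (a : ℂ))).re
            = 2 * Real.pi * a * z₀.im := by
          simp [Complex.mul_re, Complex.mul_im]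
          ring
        rw [hre]
        have h1 : Real.exp (2 * Real.pi * a * z₀.im)
            ≤ Real.exp (2 * Real.pi * |R| * (|z₀.im| + 1)) := by
          apply Real.exp_le_exp.2
          calc 2 * Real.pi * a * z₀.im ≤ |2 * Real.pi * a * z₀.im| := le_abs_self _
            _ = 2 * Real.pi * |a| * |z₀.im| := by
                rw [abs_mul, abs_mul]
                congr 1
                · rw [_root_.abs_of_nonneg (by positivity : (0:ℝ) ≤ 2 * Real.pi)]
            _ ≤ 2 * Real.pi * |R| * (|z₀.im| + 1) := by
                have := habsK a h
                have h2 : |z₀.im| ≤ |z₀.im| + 1 := by linarith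
                have hpi : (0:ℝ) < 2 * Real.pi := by positivity
                apply mul_le_mul
                · exact mul_le_mul_of_nonneg_left this hpi.le
                · exact h2
                · exact abs_nonneg _
                · positivity
        calc ‖ψ a‖ * Real.exp (2 * Real.pi * a * z₀.im)
            ≤ C * Real.exp (2 * Real.pi * |R| * (|z₀.im| + 1)) :=
              mul_le_mul ha h1 (Real.exp_nonneg _) hCnn
          _ = Real.exp (2 * Real.pi * |R| * (|z₀.im| + 1)) * K.indicator (fun _ => C) a := by
              rw [Set.indicator_of_mem h]; ring
      · simp [hψdef, Set.indicator_of_notMem h]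
    · -- measurability of F' z₀
      apply hψmeas.mul
      exact (Continuous.mul (by fun_prop) (Complex.continuous_exp.comp (by fun_prop))
        ).aestronglyMeasurable
    · -- bound on F'
      filter_upwards [hψbd] with a ha
      intro z hz
      by_cases h : a ∈ K
      · rw [Set.indicator_of_mem h]
        have him : |z.im| ≤ |z₀.im| + 1 := by
          have h1 : |z.im - z₀.im| ≤ ‖z - z₀‖ := by
            simpa using Complex.abs_im_le_norm (z - z₀)
          have h2 : ‖z - z₀‖ < 1 := by simpa [Metric.mem_ball, dist_eq_norm] using hz
          calc |z.im| ≤ |z₀.im| + |z.im - z₀.im| := by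
                have := abs_sub_abs_le_abs_sub z.im z₀.im
                have := abs_add_le z₀.im (z.im - z₀.im)
                calc |z.im| = |z₀.im + (z.im - z₀.im)| := by ring_nf
                  _ ≤ |z₀.im| + |z.im - z₀.im| := abs_add_le _ _
            _ ≤ |z₀.im| + 1 := by linarith
        rw [norm_mul, norm_mul, PW.norm_cexp]
        have hre : (-2 * Real.pi * Complex.I * ((z : ℂ) * (a : ℂ))).re
            = 2 * Real.pi * a * z.im := by
          simp [Complex.mul_re, Complex.mul_im]
          ring
        rw [hre]
        have hnrm : ‖(-2 : ℂ) * Real.pi * Complex.I * (a : ℂ)‖ = 2 * Real.pi * |a| := by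
          have he : ((-2 : ℂ) * Real.pi * Complex.I * (a : ℂ))
              = (((-2 * Real.pi * a : ℝ) : ℂ)) * Complex.I := by push_cast; ring
          rw [he, norm_mul, Complex.norm_I, mul_one, Complex.norm_real, Real.norm_eq_abs,
            abs_mul, abs_mul, abs_neg, _root_.abs_two, _root_.abs_of_nonneg Real.pi_pos.le]
        rw [hnrm]
        have h1 : Real.exp (2 * Real.pi * a * z.im)
            ≤ Real.exp (2 * Real.pi * |R| * (|z₀.im| + 1)) := by
          apply Real.exp_le_exp.2
          calc 2 * Real.pi * a * z.im ≤ |2 * Real.pi * a * z.im| := le_abs_self _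
            _ = 2 * Real.pi * |a| * |z.im| := by
                rw [abs_mul, abs_mul]
                congr 1
                · rw [_root_.abs_of_nonneg (by positivity : (0:ℝ) ≤ 2 * Real.pi)]
            _ ≤ 2 * Real.pi * |R| * (|z₀.im| + 1) := by
                have := habsK a h
                have hpi : (0:ℝ) < 2 * Real.pi := by positivity
                apply mul_le_mul
                · exact mul_le_mul_of_nonneg_left this hpi.le
                · exact him
                · exact abs_nonneg _
                · positivity
        calc ‖ψ a‖ * (2 * Real.pi * |a| * Real.exp (2 * Real.pi * a * z.im))
            ≤ C * (2 * Real.pi * |R| * Real.exp (2 * Real.pi * |R| * (|z₀.im| + 1))) := by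
              apply mul_le_mul ha ?_ (by positivity) hCnn
              apply mul_le_mul ?_ h1 (Real.exp_nonneg _) (by positivity)
              exact mul_le_mul_of_nonneg_left (habsK a h) (by positivity)
          _ = B := by rw [hB]; ring
      · simp [hψdef, Set.indicator_of_notMem h, hBnn]
    · -- integrability of bound
      rw [integrable_indicator_iff hKm]
      exact integrableOn_const hK.measure_lt_top.ne
    · -- differentiability in z
      filter_upwards with a
      intro z hz
      have h1 : HasDerivAt (fun w : ℂ => -2 * Real.pi * Complex.I * (w * a))
          (-2 * Real.pi * Complex.I * a) z := by
        have : (fun w : ℂ => -2 * Real.pi * Complex.I * (w * a))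
            = fun w : ℂ => (-2 * Real.pi * Complex.I * a) * w := by
          funext w; ring
        rw [this]
        simpa using (hasDerivAt_id z).const_mul (-2 * Real.pi * Complex.I * (a : ℂ))
      have h2 := (h1.cexp).const_mul (ψ a)
      exact h2.congr_deriv (by ring)
  have hGanal : AnalyticOnNhd ℂ G Set.univ :=
    hGdiff.differentiableOn.analyticOnNhd isOpen_univ
  -- restriction to ℝ
  set g : ℝ → ℂ := fun ξ => G (ξ : ℂ) with hgdef
  have hganal : AnalyticOnNhd ℝ g Set.univ := by
    intro x _
    exact ((hGanal _ trivial).restrictScalars).comp (Complex.ofRealCLM.analyticAt x)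
  -- g vanishes on E
  have hgE : ∀ ξ ∈ E, g ξ = 0 := by
    intro ξ hξ
    have : g ξ = ∫ x : ℝ, φ x * Complex.exp (-2 * Real.pi * Complex.I * (ξ * x)) := by
      apply integral_congr_ae
      filter_upwards [hψae] with x hx
      rw [hx]
    rw [this]
    exact hvanish ξ hξ
  -- accumulation point of E
  obtain ⟨n, hn⟩ : ∃ n : ℕ, 0 < volume (E ∩ Set.Icc (-(n : ℝ)) n) := by
    by_contra hcon
    push_neg at hcon
    simp only [le_zero_iff] at hcon
    have hsub : E ⊆ ⋃ n : ℕ, E ∩ Set.Icc (-(n : ℝ)) n := by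
      intro x hx
      obtain ⟨n, hn⟩ := exists_nat_ge |x|
      exact Set.mem_iUnion.2 ⟨n, hx, (abs_le.1 hn).1, (abs_le.1 hn).2⟩
    have : volume E = 0 :=
      le_antisymm ((measure_mono hsub).trans ((measure_iUnion_le _).trans (by simp [hcon])))
        bot_le
    exact hEpos.ne' this
  have hsInf : (E ∩ Set.Icc (-(n : ℝ)) n).Infinite := by
    intro hfin
    exact hn.ne' (hfin.measure_zero _)
  obtain ⟨x₀, -, hacc⟩ := hsInf.exists_accPt_of_subset_isCompact isCompact_Icc
    Set.inter_subset_right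
  have hfreq : ∃ᶠ z in nhdsWithin x₀ {x₀}ᶜ, g z = 0 := by
    rw [accPt_iff_frequently] at hacc
    rw [frequently_nhdsWithin_iff]
    apply hacc.mono
    rintro y ⟨hy1, hy2⟩
    exact ⟨hgE y hy2.1, hy1⟩
  have hg0 : ∀ ξ : ℝ, g ξ = 0 := fun ξ =>
    hganal.eqOn_zero_of_preconnected_of_frequently_eq_zero isPreconnected_univ
      (Set.mem_univ x₀) hfreq (Set.mem_univ ξ)
  -- hence the Fourier transform of ψ vanishes identically
  have hFψ : ∀ ξ : ℝ, 𝓕 ψ ξ = 0 := by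
    intro ξ
    rw [Real.fourier_eq']
    rw [← hg0 ξ, hgdef, hGdef]
    apply integral_congr_ae
    filter_upwards with x
    rw [smul_eq_mul]
    rw [mul_comm]
    congr 1
    have hin : (inner ℝ x ξ : ℝ) = x * ξ := by
      simp [RCLike.inner_apply, mul_comm]
    rw [hin]
    push_cast
    ring
  -- pairing with Schwartz functions
  have hpair : ∀ h : SchwartzMap ℝ ℂ, (∫ x : ℝ, 𝓕 (⇑h) x * ψ x) = 0 := by
    intro h
    have hflip : (innerₗ ℝ).flip = innerₗ ℝ := by
      apply LinearMap.ext; intro x; apply LinearMap.ext; intro y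
      simpa using real_inner_comm y x
    have := VectorFourier.integral_fourierIntegral_smul_eq_flip (μ := volume) (ν := volume)
      (e := Real.fourierChar) (L := innerₗ ℝ) (f := ⇑h) (g := ψ)
      Real.continuous_fourierChar (by exact continuous_inner) h.integrable hψint
    rw [hflip] at this
    have hLHS : (∫ ξ : ℝ, VectorFourier.fourierIntegral Real.fourierChar volume (innerₗ ℝ) (⇑h) ξ • ψ ξ)
        = ∫ ξ : ℝ, 𝓕 (⇑h) ξ * ψ ξ := rfl
    rw [hLHS] at this
    rw [this]
    have : ∀ x : ℝ, VectorFourier.fourierIntegral Real.fourierChar volume (innerₗ ℝ) ψ x = 0 :=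
      fun x => hFψ x
    simp only [this, smul_zero]
    exact integral_zero _ _
  -- conclude ψ = 0 a.e.
  have hψ0 : ψ =ᵐ[volume] 0 := by
    apply ae_eq_zero_of_integral_contDiff_smul_eq_zero hψint.locallyIntegrable
    intro gc hgc hgcsupp
    set Gg : SchwartzMap ℝ ℂ := PW.toSchwartz (fun x => (gc x : ℂ))
      (Complex.ofRealCLM.contDiff.comp hgc) (hgcsupp.comp_left Complex.ofReal_zero)
      with hGg
    set h := (SchwartzMap.fourierTransformCLE ℂ (SchwartzMap ℝ ℂ)).symm Gg with hh
    have h𝓕 : 𝓕 (⇑h) = fun x => (gc x : ℂ) := by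
      have h2 : SchwartzMap.fourierTransformCLE ℂ (SchwartzMap ℝ ℂ) h = Gg :=
        (SchwartzMap.fourierTransformCLE ℂ (SchwartzMap ℝ ℂ)).apply_symm_apply Gg
      calc 𝓕 (⇑h) = ⇑(SchwartzMap.fourierTransformCLE ℂ (SchwartzMap ℝ ℂ) h) := by
            exact (SchwartzMap.fourier_coe h).symm
        _ = fun x => (gc x : ℂ) := by rw [h2]; rfl
    have := hpair h
    rw [h𝓕] at this
    rw [← this]
    apply integral_congr_ae
    filter_upwards with x
    rw [Complex.real_smul]
  exact hψae.symm.trans hψ0
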